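/- Let Z ⊆ ℝ^d be a zonotope with generator set 𝒢 all of whose extreme points lie in {0,1/2,1}^d, and let 𝒜 ⊆ 𝒢 be minimally linearly dependent. Then the linear span of 𝒜 and the linear span of 𝒢∖𝒜 are orthogonal with respect to the standard inner product on ℝ^d: every vector in span(𝒜) is orthogonal to every vector in span(𝒢∖𝒜). -/

import Mathlib

open Set Pointwise

noncomputable section

/-- `Z` is a zonotope with generator set `G`: `Z = t + Σ_{g ∈ G} conv{0,g}` for some
translation `t`, where the generators are nonzero and pairwise non-collinear. -/
def IsZonotopeWithGenerators {d : ℕ} (Z : Set (Fin d → ℝ)) (G : Finset (Fin d → ℝ)) : Prop :=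
  (∀ g ∈ G, g ≠ 0) ∧
  (∀ g ∈ G, ∀ h ∈ G, g ≠ h → ∀ r : ℝ, g ≠ r • h) ∧
  ∃ t : Fin d → ℝ,
    Z = {x | ∃ c : (Fin d → ℝ) → ℝ, (∀ g, 0 ≤ c g ∧ c g ≤ 1) ∧ x = t + ∑ g ∈ G, c g • g}

/-- A set is half-integral when all of its extreme points have coordinates in `{0,1/2,1}`. -/
def IsHalfIntegral {d : ℕ} (P : Set (Fin d → ℝ)) : Prop :=
  ∀ x ∈ Set.extremePoints ℝ P, ∀ i, x i = 0 ∨ x i = 1/2 ∨ x i = 1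

/-- A finite set of vectors is minimally linearly dependent when it is linearly dependent
but every proper subset of it is linearly independent. -/
def MinLinDep {d : ℕ} (A : Finset (Fin d → ℝ)) : Prop :=
  ¬ LinearIndependent ℝ (fun x : (A : Set (Fin d → ℝ)) => x.val) ∧
  ∀ B : Finset (Fin d → ℝ), B ⊂ A →
    LinearIndependent ℝ (fun x : (B : Set (Fin d → ℝ)) => x.val)

/-!
For a linear functional `ℓ` that vanishes on no generator, `ℓ` attains its maximum on the
zonotope `t + Σ [0, g]` only at the vertex `t + Σ_{ℓ g > 0} g`. Perturbing functionals
lexicographically gives, for each generator `g`, two vertices that differ by `g`, and for each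
coordinate `i`, two vertices whose `i`-th coordinates differ by `Σ_g |g i|`. Half-integrality
then makes every nonzero entry of a generator at least `1/2` in absolute value, and every column
sum `Σ_g |g i|` at most `1`; so each coordinate is nonzero on at most two generators.
A minimal dependency `Σ_{a ∈ A} l a • a = 0` has all `l a ≠ 0`, so a coordinate on which some
`a ∈ A` is nonzero is nonzero on a second element of `A`, hence zero on every generator outside
`A`. The generators of `A` and of `G \ A` thus have disjoint supports.
-/

open Filter Module Matrix

section Zonotope

variable {E : Type*} [AddCommGroup E] [Module ℝ E]

def zonotope (t : E) (G : Finset E) : Set E :=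
  {x | ∃ c : E → ℝ, (∀ g, 0 ≤ c g ∧ c g ≤ 1) ∧ x = t + ∑ g ∈ G, c g • g}

theorem mem_extremePoints_of_apply_lt {A : Set E} {x : E} (ℓ : E →ₗ[ℝ] ℝ) (hx : x ∈ A)
    (hlt : ∀ y ∈ A, y ≠ x → ℓ y < ℓ x) : x ∈ A.extremePoints ℝ := by
  refine mem_extremePoints_iff_left.2 ⟨hx, fun y hy z hz hxyz => by_contra fun hyx => ?_⟩
  obtain ⟨a, b, ha, hb, hab, rfl⟩ := hxyz
  have hly := hlt y hy hyx
  have hlz : ℓ z ≤ ℓ (a • y + b • z) := by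
    rcases eq_or_ne z (a • y + b • z) with h | h
    · exact h ▸ le_rfl
    · exact (hlt z hz h).le
  rw [map_add, map_smul, map_smul, smul_eq_mul, smul_eq_mul] at hly hlz
  obtain rfl : b = 1 - a := by linarith
  nlinarith [mul_lt_mul_of_pos_left hly ha, mul_le_mul_of_nonneg_left hlz hb.le]

theorem add_sum_filter_mem_extremePoints_zonotope (t : E) (G : Finset E) (ℓ : E →ₗ[ℝ] ℝ)
    (p : E → Prop) [DecidablePred p] (hℓ : ∀ g ∈ G, ℓ g ≠ 0 ∧ (p g ↔ 0 < ℓ g)) :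
    t + ∑ g ∈ G with p g, g ∈ (zonotope t G).extremePoints ℝ := by
  set e : E → ℝ := fun g => if p g then 1 else 0
  have hv : t + ∑ g ∈ G with p g, g = t + ∑ g ∈ G, e g • g := by
    simp [e, Finset.sum_filter, ite_smul]
  rw [hv]
  refine mem_extremePoints_of_apply_lt ℓ ⟨e, fun g => by by_cases p g <;> simp [e, *], rfl⟩ ?_
  rintro _ ⟨c, hc, rfl⟩ hne
  have hterm : ∀ g ∈ G, c g * ℓ g ≤ e g * ℓ g ∧ (c g ≠ e g → c g * ℓ g < e g * ℓ g) := by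
    intro g hg
    obtain ⟨hℓg, hp⟩ := hℓ g hg
    by_cases hpg : p g
    · have : 0 < ℓ g := hp.1 hpg
      simp only [e, if_pos hpg]
      exact ⟨by nlinarith [hc g], fun h => by nlinarith [lt_of_le_of_ne (hc g).2 h]⟩
    · have : ℓ g < 0 := lt_of_le_of_ne (not_lt.1 (mt hp.2 hpg)) hℓg
      simp only [e, if_neg hpg]
      exact ⟨by nlinarith [hc g], fun h => by nlinarith [lt_of_le_of_ne (hc g).1 (Ne.symm h)]⟩
  obtain ⟨g, hg, hcg⟩ : ∃ g ∈ G, c g ≠ e g := by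
    by_contra! h
    exact hne (by rw [Finset.sum_congr rfl fun g hg => by rw [h g hg]])
  have := Finset.sum_lt_sum (fun g hg => (hterm g hg).1) ⟨g, hg, (hterm g hg).2 hcg⟩
  simpa [map_sum, smul_eq_mul] using this

-- `ℓ = N • φ + ψ` for `N` large enough.
theorem exists_dual_sign_eq_lex (G : Finset E) (φ ψ : Dual ℝ E)
    (hG : ∀ g ∈ G, φ g ≠ 0 ∨ ψ g ≠ 0) :
    ∃ ℓ : Dual ℝ E, ∀ g ∈ G, ℓ g ≠ 0 ∧ (0 < φ g ∨ φ g = 0 ∧ 0 < ψ g ↔ 0 < ℓ g) := by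
  suffices ∀ᶠ N : ℝ in atTop, ∀ g ∈ G,
      (N • φ + ψ) g ≠ 0 ∧ (0 < φ g ∨ φ g = 0 ∧ 0 < ψ g ↔ 0 < (N • φ + ψ) g) from
    let ⟨N, hN⟩ := this.exists; ⟨N • φ + ψ, hN⟩
  refine (eventually_all_finset G).2 fun g hg => ?_
  simp only [LinearMap.add_apply, LinearMap.smul_apply, smul_eq_mul]
  rcases lt_trichotomy (φ g) 0 with hφ | hφ | hφ
  · filter_upwards [eventually_gt_atTop (ψ g / -φ g)] with N hN
    have : N * φ g + ψ g < 0 := by linarith [(div_lt_iff₀ (neg_pos.2 hφ)).1 hN]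
    exact ⟨this.ne, by simp only [hφ.not_gt, hφ.ne, this.not_gt, false_and, or_self]⟩
  · have hψ := (hG g hg).resolve_left (not_not.2 hφ)
    exact .of_forall fun N => by simp [hφ, hψ]
  · filter_upwards [eventually_gt_atTop (-ψ g / φ g)] with N hN
    have : 0 < N * φ g + ψ g := by linarith [(div_lt_iff₀ hφ).1 hN]
    exact ⟨this.ne', by simp only [hφ, this, true_or]⟩

-- `φ` vanishes on `g` and on no other generator; adding `± μ` with `μ g = 1` only decides the
-- side of `g`.
theorem exists_mem_extremePoints_zonotope_add_mem {t g : E} {G : Finset E} (hg : g ∈ G)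
    (hg0 : g ≠ 0) (hcol : ∀ h ∈ G, h ≠ g → ∀ r : ℝ, h ≠ r • g) :
    ∃ v ∈ (zonotope t G).extremePoints ℝ, v + g ∈ (zonotope t G).extremePoints ℝ := by
  classical
  obtain ⟨f, hf⟩ := Module.exists_dual_forall_apply_ne_zero (K := ℝ)
    (fun h : G.erase g => (ℝ ∙ g).mkQ h) fun ⟨h, hh⟩ => by
      obtain ⟨hhg, hhG⟩ := Finset.mem_erase.1 hh
      rw [ne_eq, Submodule.mkQ_apply, Submodule.Quotient.mk_eq_zero, Submodule.mem_span_singleton]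
      exact fun ⟨r, hr⟩ => hcol h hhG hhg r hr.symm
  set φ := f ∘ₗ (ℝ ∙ g).mkQ
  have hφg : φ g = 0 := by
    simp [φ, (Submodule.Quotient.mk_eq_zero _).2 (Submodule.mem_span_singleton_self g)]
  have hφ : ∀ h ∈ G, h ≠ g → φ h ≠ 0 := fun h hh hhg => hf ⟨h, Finset.mem_erase.2 ⟨hhg, hh⟩⟩
  obtain ⟨μ, hμ⟩ := Projective.exists_dual_eq_one ℝ hg0
  have hG : ∀ h ∈ G, φ h ≠ 0 ∨ μ h ≠ 0 := fun h hh => by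
    rcases eq_or_ne h g with rfl | hhg
    · simp [hμ]
    · exact .inl (hφ h hh hhg)
  obtain ⟨ℓ₁, hℓ₁⟩ := exists_dual_sign_eq_lex G φ (-μ) (by simpa using hG)
  obtain ⟨ℓ₂, hℓ₂⟩ := exists_dual_sign_eq_lex G φ μ hG
  refine ⟨_, add_sum_filter_mem_extremePoints_zonotope t G ℓ₁ _ hℓ₁, ?_⟩
  convert add_sum_filter_mem_extremePoints_zonotope t G ℓ₂ _ hℓ₂ using 1
  have hins : {h ∈ G | 0 < φ h ∨ φ h = 0 ∧ 0 < μ h} =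
      insert g {h ∈ G | 0 < φ h ∨ φ h = 0 ∧ 0 < (-μ) h} := by
    ext h
    rcases eq_or_ne h g with rfl | hhg
    · simp [hg, hφg, hμ]
    · by_cases hh : h ∈ G
      · simp [hh, hhg, hφ h hh hhg]
      · simp [hh, hhg]
  rw [hins, Finset.sum_insert (by simp [hφg, hμ]), add_left_comm, add_comm]

theorem exists_mem_extremePoints_zonotope_sub_eq_sum_abs {t : E} {G : Finset E} (hG : 0 ∉ G)
    (φ : Dual ℝ E) : ∃ v ∈ (zonotope t G).extremePoints ℝ, ∃ w ∈ (zonotope t G).extremePoints ℝ,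
      φ v - φ w = ∑ g ∈ G, |φ g| := by
  classical
  obtain ⟨ψ, hψ⟩ := Module.exists_dual_forall_apply_ne_zero (K := ℝ) (fun g : G => (g : E))
    fun g hg => hG (hg ▸ g.2)
  have hψG : ∀ g ∈ G, ψ g ≠ 0 := fun g hg => hψ ⟨g, hg⟩
  obtain ⟨ℓ₁, hℓ₁⟩ := exists_dual_sign_eq_lex G φ ψ fun g hg => .inr (hψG g hg)
  obtain ⟨ℓ₂, hℓ₂⟩ := exists_dual_sign_eq_lex G (-φ) ψ fun g hg => .inr (hψG g hg)
  refine ⟨_, add_sum_filter_mem_extremePoints_zonotope t G ℓ₁ _ hℓ₁,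
    _, add_sum_filter_mem_extremePoints_zonotope t G ℓ₂ _ hℓ₂, ?_⟩
  rw [map_add, map_add, add_sub_add_left_eq_sub, map_sum, map_sum, Finset.sum_filter,
    Finset.sum_filter, ← Finset.sum_sub_distrib]
  refine Finset.sum_congr rfl fun g _ => ?_
  rcases lt_trichotomy (φ g) 0 with hφ | hφ | hφ
  · simp [hφ, hφ.not_gt, hφ.ne, abs_of_neg hφ]
  · simp [hφ]
  · simp [hφ, hφ.not_gt, hφ.ne', abs_of_pos hφ]

end Zonotope

theorem eq_zero_or_half_le_abs_sub {v w : ℝ} (hv : v = 0 ∨ v = 1 / 2 ∨ v = 1)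
    (hw : w = 0 ∨ w = 1 / 2 ∨ w = 1) : v - w = 0 ∨ 1 / 2 ≤ |v - w| := by
  rcases hv with rfl | rfl | rfl <;> rcases hw with rfl | rfl | rfl <;> norm_num [abs_of_neg]

section HalfIntegral

variable {d : ℕ} {Z : Set (Fin d → ℝ)} {G : Finset (Fin d → ℝ)}

theorem IsZonotopeWithGenerators.eq_zero_or_half_le_abs_apply (hZ : IsZonotopeWithGenerators Z G)
    (hHI : IsHalfIntegral Z) {g : Fin d → ℝ} (hg : g ∈ G) (i : Fin d) :
    g i = 0 ∨ 1 / 2 ≤ |g i| := by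
  obtain ⟨hG0, hcol, t, rfl⟩ := hZ
  obtain ⟨v, hv, hvg⟩ := exists_mem_extremePoints_zonotope_add_mem (t := t) hg (hG0 g hg)
    fun h hh hhg => hcol h hh g hg hhg
  simpa using eq_zero_or_half_le_abs_sub (hHI _ hvg i) (hHI _ hv i)

theorem IsZonotopeWithGenerators.sum_abs_apply_le_one (hZ : IsZonotopeWithGenerators Z G)
    (hHI : IsHalfIntegral Z) (i : Fin d) : ∑ g ∈ G, |g i| ≤ 1 := by
  obtain ⟨hG0, -, t, rfl⟩ := hZ
  obtain ⟨v, hv, w, hw, hvw⟩ := exists_mem_extremePoints_zonotope_sub_eq_sum_abs (t := t)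
    (fun h => hG0 0 h rfl) (LinearMap.proj i)
  simp only [LinearMap.coe_proj, Function.eval] at hvw
  rw [← hvw]
  rcases hHI v hv i with h | h | h <;> rcases hHI w hw i with h' | h' | h' <;> rw [h, h'] <;>
    norm_num

end HalfIntegral

theorem LinearMap.apply_apply_eq_zero_of_mem_span {R M N P : Type*} [CommSemiring R]
    [AddCommMonoid M] [AddCommMonoid N] [AddCommMonoid P] [Module R M] [Module R N] [Module R P]
    (B : M →ₗ[R] N →ₗ[R] P) {s : Set M} {t : Set N} (h : ∀ m ∈ s, ∀ n ∈ t, B m n = 0)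
    {x : M} {y : N} (hx : x ∈ Submodule.span R s) (hy : y ∈ Submodule.span R t) : B x y = 0 := by
  have hxy := Submodule.apply_mem_map₂ B hx hy
  rwa [Submodule.map₂_span_span, Submodule.span_eq_bot.2, Submodule.mem_bot] at hxy
  rintro _ ⟨m, hm, n, hn, rfl⟩
  exact h m hm n hn

section MinLinDep

variable {d : ℕ} {A : Finset (Fin d → ℝ)}

theorem MinLinDep.exists_sum_smul_eq_zero (hA : MinLinDep A) :
    ∃ l : (Fin d → ℝ) → ℝ, (∀ a ∈ A, l a ≠ 0) ∧ ∑ a ∈ A, l a • a = 0 := by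
  classical
  obtain ⟨l, hl, a₀, ha₀, hla₀⟩ := (not_linearIndepOn_finset_iff (v := id)).1 hA.1
  refine ⟨l, fun a ha hla => hla₀ ?_, by simpa using hl⟩
  have hsum : ∑ b ∈ A.erase a, l b • id b = 0 := by
    rwa [Finset.sum_erase _ (by simp [hla])]
  exact (linearIndepOn_finset_iff (v := id)).1 (hA.2 _ (Finset.erase_ssubset ha)) l hsum a₀
    (Finset.mem_erase.2 ⟨fun h => hla₀ (h ▸ hla), ha₀⟩)

theorem MinLinDep.exists_ne_apply_ne_zero (hA : MinLinDep A) {a : Fin d → ℝ} (ha : a ∈ A)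
    {i : Fin d} (hai : a i ≠ 0) : ∃ b ∈ A, b ≠ a ∧ b i ≠ 0 := by
  obtain ⟨l, hl, hsum⟩ := hA.exists_sum_smul_eq_zero
  by_contra! h
  have hi := congrFun hsum i
  rw [Finset.sum_apply, Finset.sum_eq_single_of_mem a ha fun b hb hba => by simp [h b hb hba]]
    at hi
  simp [hl a ha, hai] at hi

end MinLinDep

theorem apply_mul_apply_eq_zero_of_minLinDep {d : ℕ} {Z : Set (Fin d → ℝ)}
    {G A : Finset (Fin d → ℝ)} (hZ : IsZonotopeWithGenerators Z G) (hHI : IsHalfIntegral Z)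
    (hAG : A ⊆ G) (hA : MinLinDep A) {a h : Fin d → ℝ} (ha : a ∈ A) (hhG : h ∈ G) (hhA : h ∉ A)
    (i : Fin d) : a i * h i = 0 := by
  rcases eq_or_ne (a i) 0 with hai | hai
  · simp [hai]
  obtain ⟨b, hb, hba, hbi⟩ := hA.exists_ne_apply_ne_zero ha hai
  have hsum : |a i| + |b i| + |h i| ≤ ∑ g ∈ G, |g i| := by
    have hha : h ≠ a := fun e => hhA (e ▸ ha)
    have hhb : h ≠ b := fun e => hhA (e ▸ hb)
    calc |a i| + |b i| + |h i| = ∑ g ∈ {a, b, h}, |g i| := by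
          rw [Finset.sum_insert (by simp [hba.symm, hha.symm]),
            Finset.sum_insert (by simp [hhb.symm]), Finset.sum_singleton, add_assoc]
      _ ≤ ∑ g ∈ G, |g i| := Finset.sum_le_sum_of_subset_of_nonneg
          (by simp [Finset.insert_subset_iff, hAG ha, hAG hb, hhG]) fun _ _ _ => abs_nonneg _
  have hai' := (hZ.eq_zero_or_half_le_abs_apply hHI (hAG ha) i).resolve_left hai
  have hbi' := (hZ.eq_zero_or_half_le_abs_apply hHI (hAG hb) i).resolve_left hbi
  have hhi : |h i| ≤ 0 := by linarith [hZ.sum_abs_apply_le_one hHI i]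
  simp [abs_nonpos_iff.1 hhi]

/-- If `𝒜` is a minimally linearly dependent subset of the generator set `𝒢` of a
half-integral zonotope, then `span 𝒜` and `span (𝒢 ∖ 𝒜)` are orthogonal for the
standard inner product of `ℝ^d`. -/
theorem halfIntegral_zonotope_minLinDep_orthogonal {d : ℕ} (Z : Set (Fin d → ℝ))
    (G A : Finset (Fin d → ℝ)) (hZ : IsZonotopeWithGenerators Z G)
    (hHI : IsHalfIntegral Z) (hAG : A ⊆ G) (hA : MinLinDep A) :
    ∀ x ∈ Submodule.span ℝ (A : Set (Fin d → ℝ)),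
      ∀ y ∈ Submodule.span ℝ ((G : Set (Fin d → ℝ)) \ (A : Set (Fin d → ℝ))),
        ∑ i, x i * y i = 0 := by
  intro x hx y hy
  refine (dotProductBilin ℝ ℝ : (Fin d → ℝ) →ₗ[ℝ] _ →ₗ[ℝ] ℝ).apply_apply_eq_zero_of_mem_span (fun a ha h hh => ?_) hx hy
  exact Finset.sum_eq_zero (s := Finset.univ) fun i _ =>
    apply_mul_apply_eq_zero_of_minLinDep hZ hHI hAG hA ha hh.1 hh.2 i
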